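/- arXiv:1908.06699 — 5 statements merged into one kernel-verified Lean document; each statement's English description precedes it below -/
import Mathlib

section
/- Let c ≥ 1, let h : {1,…,c} → ℝ satisfy h_k > 0 for all k, and let r > 1. Then for every α in the probability simplex Δ_c, one has Σ_{k=1}^c h_k α_k^r ≥ (Σ_{k=1}^c h_k^{1/(1−r)})^{1−r}. -/
/-!
Hölder's inequality with exponents `r` and `r / (r - 1)`, applied to
`α_k = h_k^{-1/r} · (h_k^{1/r} α_k)`, gives
`1 = Σ α_k ≤ (Σ h_k^{1/(1-r)})^{(r-1)/r} (Σ h_k α_k^r)^{1/r}`; raising to the power `r`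
and dividing yields the bound.
-/

open Finset Real

theorem mul_div_rpow_eq_rpow_one_sub_mul_rpow {w x : ℝ} (hw : 0 < w) (hx : 0 ≤ x) (r : ℝ) :
    w * (x / w) ^ r = w ^ (1 - r) * x ^ r := by
  rw [div_rpow hx hw.le, rpow_sub hw, rpow_one]
  ring

theorem rpow_one_div_one_sub_rpow_one_sub {h r : ℝ} (hh : 0 ≤ h) (hr : r ≠ 1) :
    (h ^ (1 / (1 - r))) ^ (1 - r) = h := by
  rw [one_div]
  exact rpow_inv_rpow hh (sub_ne_zero.mpr hr.symm)

/-- Equality holds for `x i = h i ^ (1 / (1 - r))`. -/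
theorem rpow_sum_le_sum_rpow_one_div_one_sub_mul_sum_mul_rpow {ι : Type*} (s : Finset ι)
    {r : ℝ} (hr : 1 < r) {h x : ι → ℝ} (hh : ∀ i, 0 < h i) (hx : ∀ i, 0 ≤ x i) :
    (∑ i ∈ s, x i) ^ r ≤
      (∑ i ∈ s, h i ^ (1 / (1 - r))) ^ (r - 1) * ∑ i ∈ s, h i * x i ^ r := by
  set w : ι → ℝ := fun i ↦ h i ^ (1 / (1 - r))
  have hw : ∀ i, 0 < w i := fun i ↦ rpow_pos_of_pos (hh i) _
  have hx_eq : ∀ i, w i * (x i / w i) = x i := fun i ↦ mul_div_cancel₀ _ (hw i).ne'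
  have hhx_eq : ∀ i, w i * (x i / w i) ^ r = h i * x i ^ r := fun i ↦ by
    rw [mul_div_rpow_eq_rpow_one_sub_mul_rpow (hw i) (hx i),
      rpow_one_div_one_sub_rpow_one_sub (hh i).le hr.ne']
  have holder := inner_le_weight_mul_Lp_of_nonneg s hr.le w (fun i ↦ x i / w i)
    (fun i ↦ (hw i).le) (fun i ↦ div_nonneg (hx i) (hw i).le)
  simp only [hx_eq, hhx_eq] at holder
  have hW : 0 ≤ ∑ i ∈ s, w i := sum_nonneg fun i _ ↦ (hw i).le
  have hS : 0 ≤ ∑ i ∈ s, h i * x i ^ r :=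
    sum_nonneg fun i _ ↦ mul_nonneg (hh i).le (rpow_nonneg (hx i) r)
  calc (∑ i ∈ s, x i) ^ r
      ≤ ((∑ i ∈ s, w i) ^ (1 - r⁻¹) * (∑ i ∈ s, h i * x i ^ r) ^ r⁻¹) ^ r :=
        rpow_le_rpow (sum_nonneg fun i _ ↦ hx i) holder (by linarith)
    _ = (∑ i ∈ s, w i) ^ (r - 1) * ∑ i ∈ s, h i * x i ^ r := by
        rw [mul_rpow (rpow_nonneg hW _) (rpow_nonneg hS _), ← rpow_mul hW,
          rpow_inv_rpow hS (by linarith)]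
        congr 2
        field_simp

theorem fuzzy_objective_lower_bound_general (c : ℕ)
    (h : Fin c → ℝ) (hpos : ∀ k, 0 < h k) (r : ℝ) (hr : 1 < r)
    (α : Fin c → ℝ) (hα : ∀ k, 0 ≤ α k) (hsum : ∑ k, α k = 1) :
    (∑ k, (h k) ^ (1 / (1 - r))) ^ (1 - r) ≤ ∑ k, h k * (α k) ^ r := by
  set W := ∑ k, (h k) ^ (1 / (1 - r))
  set S := ∑ k, h k * (α k) ^ r
  have hW : 0 ≤ W := sum_nonneg fun k _ ↦ (rpow_pos_of_pos (hpos k) _).le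
  have hS : 0 ≤ S := sum_nonneg fun k _ ↦ mul_nonneg (hpos k).le (rpow_nonneg (hα k) r)
  have key : 1 ≤ W ^ (r - 1) * S := by
    have := rpow_sum_le_sum_rpow_one_div_one_sub_mul_sum_mul_rpow univ hr hpos hα
    rwa [hsum, one_rpow] at this
  have hWr : 0 < W ^ (r - 1) :=
    (rpow_nonneg hW _).lt_of_ne fun h0 ↦ by rw [← h0, zero_mul] at key; linarith
  rw [← neg_sub, rpow_neg hW, inv_le_iff_one_le_mul₀' hWr]
  exact key

/-- Lower bound for the fuzzy assignment objective over the probability simplex: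
for `h_k > 0` and `r > 1`, every `α ∈ Δ_c` satisfies
`Σ h_k α_k^r ≥ (Σ h_k^{1/(1−r)})^{1−r}`. -/
theorem fuzzy_objective_lower_bound (c : ℕ) (hc : 1 ≤ c)
    (h : Fin c → ℝ) (hpos : ∀ k, 0 < h k) (r : ℝ) (hr : 1 < r)
    (α : Fin c → ℝ) (hα : ∀ k, 0 ≤ α k) (hsum : ∑ k, α k = 1) :
    (∑ k, (h k) ^ (1 / (1 - r))) ^ (1 - r) ≤ ∑ k, h k * (α k) ^ r :=
  fuzzy_objective_lower_bound_general c h hpos r hr α hα hsum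
end

section
/- Let c ≥ 1, let h : {1,…,c} → ℝ satisfy h_k > 0 for all k, and let r > 1. Then the vector α* with entries α*_k = h_k^{1/(1−r)} / (Σ_{s=1}^c h_s^{1/(1−r)}) is a global minimizer of the fuzzy assignment objective f_h(α) = Σ_{k=1}^c h_k α_k^r over the probability simplex Δ_c; i.e., for all α ∈ Δ_c, f_h(α*) ≤ f_h(α). -/
/-!
Write `β_k = h_k^{1/(1−r)}`, so that `h_k = β_k^{1−r}` and `f_h(α) = Σ_k α_k^r / β_k^{r−1}`.
By the weighted Hölder inequality with weights `β_k` (Radon's inequality),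
`(Σ_k α_k)^r ≤ (Σ_k β_k)^{r−1} f_h(α)`, so `f_h ≥ (Σ_k β_k)^{1−r}` on the simplex, and this
bound is attained at `α* = β / Σ_k β_k`.
-/

open Finset Real

section RadonInequality

variable {ι : Type*} (s : Finset ι)

theorem rpow_sum_mul_rpow_sum_one_sub_le {p : ℝ} (hp : 1 ≤ p) (a b : ι → ℝ)
    (ha : ∀ i, 0 ≤ a i) (hb : ∀ i, 0 < b i) :
    (∑ i ∈ s, a i) ^ p * (∑ i ∈ s, b i) ^ (1 - p) ≤ ∑ i ∈ s, b i ^ (1 - p) * a i ^ p := by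
  rcases s.eq_empty_or_nonempty with rfl | hs
  · simp [zero_rpow (by linarith : p ≠ 0)]
  have hB : 0 < ∑ i ∈ s, b i := sum_pos (fun i _ => hb i) hs
  have hterm : ∀ i, b i * (a i / b i) ^ p = b i ^ (1 - p) * a i ^ p := fun i => by
    rw [div_rpow (ha i) (hb i).le, rpow_sub (hb i), rpow_one]
    field_simp
  set F := ∑ i ∈ s, b i ^ (1 - p) * a i ^ p
  have hF : 0 ≤ F :=
    sum_nonneg fun i _ => mul_nonneg (rpow_nonneg (hb i).le _) (rpow_nonneg (ha i) _)
  have holder : ∑ i ∈ s, a i ≤ (∑ i ∈ s, b i) ^ (1 - p⁻¹) * F ^ p⁻¹ := by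
    have := inner_le_weight_mul_Lp_of_nonneg s hp b (fun i => a i / b i) (fun i => (hb i).le)
      (fun i => div_nonneg (ha i) (hb i).le)
    simpa only [mul_div_cancel₀ _ (hb _).ne', hterm] using this
  calc (∑ i ∈ s, a i) ^ p * (∑ i ∈ s, b i) ^ (1 - p)
      ≤ ((∑ i ∈ s, b i) ^ (1 - p⁻¹) * F ^ p⁻¹) ^ p * (∑ i ∈ s, b i) ^ (1 - p) := by
        gcongr
        exact sum_nonneg fun i _ => ha i
    _ = F := by
        rw [mul_rpow (rpow_nonneg hB.le _) (rpow_nonneg hF _), ← rpow_mul hB.le, ← rpow_mul hF,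
          inv_mul_cancel₀ (by linarith), rpow_one, mul_right_comm, ← rpow_add hB]
        have : (1 - p⁻¹) * p + (1 - p) = 0 := by field_simp; ring
        rw [this, rpow_zero, one_mul]

theorem sum_rpow_one_sub_mul_div_sum_rpow {p : ℝ} (b : ι → ℝ) (hs : s.Nonempty)
    (hb : ∀ i, 0 < b i) :
    ∑ i ∈ s, b i ^ (1 - p) * (b i / ∑ j ∈ s, b j) ^ p = (∑ i ∈ s, b i) ^ (1 - p) := by
  have hB : 0 < ∑ i ∈ s, b i := sum_pos (fun i _ => hb i) hs
  have hterm : ∀ i, b i ^ (1 - p) * (b i / ∑ j ∈ s, b j) ^ p = b i / (∑ j ∈ s, b j) ^ p :=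
    fun i => by
      rw [div_rpow (hb i).le hB.le, ← mul_div_assoc, ← rpow_add (hb i), sub_add_cancel, rpow_one]
  rw [sum_congr rfl fun i _ => hterm i, ← sum_div, rpow_sub hB, rpow_one]

end RadonInequality

/-- The closed-form point `α*_k = h_k^{1/(1−r)} / Σ_s h_s^{1/(1−r)}` is a global minimizer of
the fuzzy assignment objective `f_h(α) = Σ_k h_k α_k^r` over the probability simplex. -/
theorem fuzzy_optimal_point_is_minimizer (c : ℕ) (hc : 1 ≤ c)
    (h : Fin c → ℝ) (hpos : ∀ k, 0 < h k) (r : ℝ) (hr : 1 < r)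
    (α : Fin c → ℝ) (hα : ∀ k, 0 ≤ α k) (hsum : ∑ k, α k = 1) :
    ∑ k, h k * ((h k) ^ (1 / (1 - r)) / ∑ s, (h s) ^ (1 / (1 - r))) ^ r
      ≤ ∑ k, h k * (α k) ^ r := by
  set β : Fin c → ℝ := fun k => h k ^ (1 / (1 - r))
  have hβ : ∀ k, 0 < β k := fun k => rpow_pos_of_pos (hpos k) _
  have h_eq : ∀ k, h k = β k ^ (1 - r) := fun k => by
    show h k = (h k ^ (1 / (1 - r))) ^ (1 - r)
    rw [one_div, rpow_inv_rpow (hpos k).le (by linarith)]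
  have hne : (univ : Finset (Fin c)).Nonempty := univ_nonempty_iff.mpr (Fin.pos_iff_nonempty.mp hc)
  calc ∑ k, h k * (β k / ∑ s, β s) ^ r
      = (∑ k, β k) ^ (1 - r) := by
        simp only [h_eq]
        exact sum_rpow_one_sub_mul_div_sum_rpow univ β hne hβ
    _ = (∑ k, α k) ^ r * (∑ k, β k) ^ (1 - r) := by rw [hsum, one_rpow, one_mul]
    _ ≤ ∑ k, β k ^ (1 - r) * α k ^ r := rpow_sum_mul_rpow_sum_one_sub_le univ hr.le α β hα hβ
    _ = ∑ k, h k * α k ^ r := by simp only [h_eq]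
end

section
/- Let c ≥ 1, let h : {1,…,c} → ℝ satisfy h_k > 0 for all k, let r > 1, let 1 ≤ K̃ ≤ c, and let σ be a permutation of {1,…,c} with h_{σ(1)} ≤ ⋯ ≤ h_{σ(c)}. Define α* ∈ ℝ^c by α*_{σ(k)} = h_{σ(k)}^{1/(1−r)} / (Σ_{s=1}^{K̃} h_{σ(s)}^{1/(1−r)}) for 1 ≤ k ≤ K̃ and α*_{σ(k)} = 0 for K̃ < k ≤ c. Then α* lies in the probability simplex Δ_c, α* has exactly K̃ nonzero entries, and for every α ∈ Δ_c with at most K̃ nonzero entries one has Σ_{k=1}^c h_k (α*_k)^r ≤ Σ_{k=1}^c h_k α_k^r. -/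
open scoped Classical

/-! Write `h k = g k ^ (1 - r)` with `g k = h k ^ (1 / (1 - r))`. On a fixed support `A`, Jensen's
inequality for `t ↦ t ^ r` bounds the objective below by `(∑ k ∈ A, g k) ^ (1 - r)`, with equality
for `g` normalized on `A`. As `t ↦ t ^ (1 - r)` is decreasing, the best support of size at most
`K̃` maximizes `∑ k ∈ A, g k`, and since `g` decreases as `h` grows, that support is the set of the
`K̃` indices with the smallest `h`-values. -/

open Finset

namespace Finset

variable {ι M : Type*} [DecidableEq ι] [AddCommMonoid M] [LinearOrder M] [IsOrderedAddMonoid M]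

theorem sum_le_sum_of_card_le_of_forall_sdiff_le {s t : Finset ι} {f : ι → M}
    (hst : #s ≤ #t) (hf : ∀ j ∈ t, 0 ≤ f j) (hle : ∀ i ∈ s \ t, ∀ j ∈ t \ s, f i ≤ f j) :
    ∑ i ∈ s, f i ≤ ∑ j ∈ t, f j := by
  have hsdiff : ∑ i ∈ s \ t, f i ≤ ∑ j ∈ t \ s, f j := by
    rcases (t \ s).eq_empty_or_nonempty with hts | hts
    · have : s \ t = ∅ := by
        rw [← card_eq_zero, ← Nat.le_zero, ← card_eq_zero.mpr hts]
        exact card_sdiff_le_card_sdiff_iff.mpr hst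
      simp [this, hts]
    · set m := (t \ s).inf' hts f
      calc ∑ i ∈ s \ t, f i ≤ #(s \ t) • m :=
            sum_le_card_nsmul _ _ _ fun i hi => le_inf' hts _ (hle i hi)
        _ ≤ #(t \ s) • m := by
            obtain ⟨j, hj, hjm⟩ : ∃ j ∈ t \ s, m = f j := exists_mem_eq_inf' hts f
            have hm : 0 ≤ m := hjm ▸ hf j (mem_sdiff.mp hj).1
            exact nsmul_le_nsmul_left hm (card_sdiff_le_card_sdiff_iff.mpr hst)
        _ ≤ ∑ j ∈ t \ s, f j := card_nsmul_le_sum _ _ _ fun j hj => inf'_le f hj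
  rw [← sum_inter_add_sum_sdiff s t, ← sum_inter_add_sum_sdiff t s, inter_comm]
  exact add_le_add_right hsdiff _

end Finset

section Normalize

variable {ι : Type*} {s : Finset ι} {g : ι → ℝ} {r : ℝ}

noncomputable def normalizeOn (s : Finset ι) (g : ι → ℝ) (i : ι) : ℝ :=
  if i ∈ s then g i / ∑ j ∈ s, g j else 0

theorem normalizeOn_nonneg (hg : ∀ i ∈ s, 0 < g i) (i : ι) : 0 ≤ normalizeOn s g i := by
  unfold normalizeOn
  split_ifs with hi
  · exact div_nonneg (hg i hi).le (sum_nonneg fun j hj => (hg j hj).le)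
  · exact le_rfl

theorem sum_normalizeOn [Fintype ι] (hg : ∀ i ∈ s, 0 < g i) (hs : s.Nonempty) :
    ∑ i, normalizeOn s g i = 1 := by
  simp only [normalizeOn]
  rw [← sum_filter, filter_mem_eq_inter, univ_inter, ← sum_div,
    div_self (sum_pos hg hs).ne']

theorem filter_normalizeOn_ne_zero [Fintype ι] (hg : ∀ i ∈ s, 0 < g i) :
    ({i | normalizeOn s g i ≠ 0} : Finset ι) = s := by
  ext i
  by_cases hi : i ∈ s
  · simp [normalizeOn, hi, (hg i hi).ne', (sum_pos hg ⟨i, hi⟩).ne']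
  · simp [normalizeOn, hi]

theorem sum_rpow_one_sub_mul_normalizeOn_rpow [Fintype ι] (hg : ∀ i ∈ s, 0 < g i)
    (hs : s.Nonempty) (hr : r ≠ 0) :
    ∑ i, g i ^ (1 - r) * normalizeOn s g i ^ r = (∑ j ∈ s, g j) ^ (1 - r) := by
  set S := ∑ j ∈ s, g j
  have hterm : ∀ i ∈ s, g i ^ (1 - r) * (g i / S) ^ r = g i / S ^ r := fun i hi => by
    rw [Real.div_rpow (hg i hi).le (sum_nonneg fun j hj => (hg j hj).le), mul_div_assoc',
      ← Real.rpow_add (hg i hi), sub_add_cancel, Real.rpow_one]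
  simp only [normalizeOn, apply_ite (· ^ r), Real.zero_rpow hr, mul_ite, mul_zero]
  rw [← sum_filter, filter_mem_eq_inter, univ_inter, sum_congr rfl hterm, ← sum_div,
    Real.rpow_sub (sum_pos hg hs), Real.rpow_one]

theorem rpow_sum_le_sum_rpow_one_sub_mul_rpow (hg : ∀ i ∈ s, 0 < g i) {α : ι → ℝ}
    (hα : ∀ i ∈ s, 0 ≤ α i) (hα1 : ∑ i ∈ s, α i = 1) (hr : 1 ≤ r) :
    (∑ i ∈ s, g i) ^ (1 - r) ≤ ∑ i ∈ s, g i ^ (1 - r) * α i ^ r := by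
  have hs : s.Nonempty := nonempty_of_sum_ne_zero (hα1 ▸ one_ne_zero)
  set S := ∑ i ∈ s, g i
  have hS : 0 < S := sum_pos hg hs
  -- Jensen for `t ↦ t ^ r`, with weights `g i / S` at the points `α i * S / g i`.
  have hJensen := Real.rpow_arith_mean_le_arith_mean_rpow s (fun i => g i / S)
    (fun i => α i * (S / g i)) (fun i hi => (div_pos (hg i hi) hS).le)
    (by rw [← sum_div, div_self hS.ne'])
    (fun i hi => mul_nonneg (hα i hi) (div_pos hS (hg i hi)).le) hr
  have hmean : ∑ i ∈ s, g i / S * (α i * (S / g i)) = 1 := by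
    rw [← hα1]
    exact sum_congr rfl fun i hi => by field_simp [(hg i hi).ne']
  have hpow : ∀ i ∈ s, g i / S * (α i * (S / g i)) ^ r
      = S ^ (r - 1) * (g i ^ (1 - r) * α i ^ r) := fun i hi => by
    rw [Real.mul_rpow (hα i hi) (div_pos hS (hg i hi)).le, Real.div_rpow hS.le (hg i hi).le,
      Real.rpow_sub_one hS.ne', Real.rpow_sub (hg i hi), Real.rpow_one]
    field_simp
  rw [hmean, Real.one_rpow, sum_congr rfl hpow, ← mul_sum] at hJensen
  have hSinv : S ^ (1 - r) = (S ^ (r - 1))⁻¹ := by rw [← Real.rpow_neg hS.le, neg_sub]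
  rwa [hSinv, inv_le_iff_one_le_mul₀' (Real.rpow_pos_of_pos hS _)]

theorem rpow_sum_filter_ne_zero_le [Fintype ι] (hg : ∀ i, 0 < g i) {α : ι → ℝ}
    (hα : ∀ i, 0 ≤ α i) (hα1 : ∑ i, α i = 1) (hr : 1 ≤ r) :
    (∑ i with α i ≠ 0, g i) ^ (1 - r) ≤ ∑ i, g i ^ (1 - r) * α i ^ r :=
  calc _ ≤ ∑ i with α i ≠ 0, g i ^ (1 - r) * α i ^ r :=
        rpow_sum_le_sum_rpow_one_sub_mul_rpow (fun i _ => hg i) (fun i _ => hα i)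
          (by rwa [sum_filter_ne_zero]) hr
    _ = _ := sum_filter_of_ne fun i _ hi => by
        contrapose! hi
        rw [hi, Real.zero_rpow (by linarith), mul_zero]

end Normalize

theorem Equiv.Perm.le_of_symm_lt_of_le_symm {β : Type*} [Preorder β] {c K : ℕ} {h : Fin c → β}
    {σ : Equiv.Perm (Fin c)} (hsort : Monotone (h ∘ σ)) {a b : Fin c}
    (ha : (σ.symm a : ℕ) < K) (hb : K ≤ (σ.symm b : ℕ)) : h a ≤ h b := by
  simpa using hsort (Fin.le_def.mpr (ha.le.trans hb) : σ.symm a ≤ σ.symm b)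

theorem l0_constrained_closed_form_general (c : ℕ)
    (h : Fin c → ℝ) (hpos : ∀ k, 0 < h k) (r : ℝ) (hr : 1 < r)
    (Kt : ℕ) (hK1 : 1 ≤ Kt) (hKc : Kt ≤ c)
    (σ : Equiv.Perm (Fin c)) (hsort : ∀ k l : Fin c, k ≤ l → h (σ k) ≤ h (σ l))
    (αstar : Fin c → ℝ)
    (hαstar : ∀ j : Fin c, αstar j =
      if ((σ.symm j : ℕ) < Kt) then
        (h j) ^ (1 / (1 - r)) /
          ∑ s ∈ Finset.univ.filter (fun s : Fin c => (s : ℕ) < Kt),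
            (h (σ s)) ^ (1 / (1 - r))
      else 0) :
    (∀ k, 0 ≤ αstar k) ∧ (∑ k, αstar k = 1) ∧
    (Finset.univ.filter (fun k : Fin c => αstar k ≠ 0)).card = Kt ∧
    (∀ α : Fin c → ℝ, (∀ k, 0 ≤ α k) → (∑ k, α k = 1) →
      (Finset.univ.filter (fun k : Fin c => α k ≠ 0)).card ≤ Kt →
      ∑ k, h k * (αstar k) ^ r ≤ ∑ k, h k * (α k) ^ r) := by
  set g : Fin c → ℝ := fun k => h k ^ (1 / (1 - r))
  have hg : ∀ k, 0 < g k := fun k => Real.rpow_pos_of_pos (hpos k) _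
  have hhg : ∀ k, h k = g k ^ (1 - r) := fun k => by
    show h k = (h k ^ (1 / (1 - r))) ^ (1 - r)
    rw [one_div, Real.rpow_inv_rpow (hpos k).le (by linarith)]
  set S := (univ.filter fun s : Fin c => (s : ℕ) < Kt).map σ.toEmbedding
  have hS : #S = Kt := by rw [card_map, Fin.card_filter_val_lt, min_eq_right hKc]
  have hαS : αstar = normalizeOn S g := funext fun j => by
    simp [hαstar, normalizeOn, S, g]
  have hSg : ∀ a ∈ S, ∀ b ∉ S, g b ≤ g a := fun a ha b hb =>
    Real.rpow_le_rpow_of_nonpos (hpos a)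
      (Equiv.Perm.le_of_symm_lt_of_le_symm (fun k l => hsort k l) (by simpa [S] using ha)
        (by simpa [S] using hb))
      (one_div_nonpos.mpr (by linarith))
  have hSpos : ∀ i ∈ S, 0 < g i := fun i _ => hg i
  have hSne : S.Nonempty := card_pos.mp (hS ▸ hK1)
  subst hαS
  refine ⟨normalizeOn_nonneg hSpos, sum_normalizeOn hSpos hSne,
    by rw [filter_normalizeOn_ne_zero hSpos, hS], fun α hα0 hα1 hαK => ?_⟩
  have hA : 0 < ∑ i with α i ≠ 0, g i := sum_pos (fun i _ => hg i)
    (nonempty_of_sum_ne_zero (by rw [sum_filter_ne_zero, hα1]; exact one_ne_zero))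
  calc ∑ k, h k * normalizeOn S g k ^ r = ∑ k, g k ^ (1 - r) * normalizeOn S g k ^ r := by
        simp only [hhg]
    _ = (∑ j ∈ S, g j) ^ (1 - r) :=
        sum_rpow_one_sub_mul_normalizeOn_rpow hSpos hSne (by linarith)
    _ ≤ (∑ i with α i ≠ 0, g i) ^ (1 - r) := by
        refine Real.rpow_le_rpow_of_nonpos hA ?_ (by linarith)
        exact sum_le_sum_of_card_le_of_forall_sdiff_le (hS ▸ hαK) (fun j _ => (hg j).le)
          fun i hi j hj => hSg j (mem_sdiff.mp hj).1 i (mem_sdiff.mp hi).2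
    _ ≤ ∑ k, g k ^ (1 - r) * α k ^ r := rpow_sum_filter_ne_zero_le hg hα0 hα1 hr.le
    _ = ∑ k, h k * α k ^ r := by simp only [hhg]

/-- Closed-form solution (equation (16) of the paper) of the `L₀`-constrained simplex
subproblem: the vector `α*` supported on the `K̃` indices with smallest `h`-values, with
`α*_{σ(k)} = h_{σ(k)}^{1/(1−r)} / Σ_{s≤K̃} h_{σ(s)}^{1/(1−r)}` there and `0` elsewhere, lies in
the probability simplex, has exactly `K̃` nonzero entries, and minimizes `Σ_k h_k α_k^r` among
all simplex vectors with at most `K̃` nonzero entries. -/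
theorem l0_constrained_closed_form (c : ℕ) (hc : 1 ≤ c)
    (h : Fin c → ℝ) (hpos : ∀ k, 0 < h k) (r : ℝ) (hr : 1 < r)
    (Kt : ℕ) (hK1 : 1 ≤ Kt) (hKc : Kt ≤ c)
    (σ : Equiv.Perm (Fin c)) (hsort : ∀ k l : Fin c, k ≤ l → h (σ k) ≤ h (σ l))
    (αstar : Fin c → ℝ)
    (hαstar : ∀ j : Fin c, αstar j =
      if ((σ.symm j : ℕ) < Kt) then
        (h j) ^ (1 / (1 - r)) /
          ∑ s ∈ Finset.univ.filter (fun s : Fin c => (s : ℕ) < Kt),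
            (h (σ s)) ^ (1 / (1 - r))
      else 0) :
    (∀ k, 0 ≤ αstar k) ∧ (∑ k, αstar k = 1) ∧
    (Finset.univ.filter (fun k : Fin c => αstar k ≠ 0)).card = Kt ∧
    (∀ α : Fin c → ℝ, (∀ k, 0 ≤ α k) → (∑ k, α k = 1) →
      (Finset.univ.filter (fun k : Fin c => α k ≠ 0)).card ≤ Kt →
      ∑ k, h k * (αstar k) ^ r ≤ ∑ k, h k * (α k) ^ r) :=
  l0_constrained_closed_form_general c h hpos r hr Kt hK1 hKc σ hsort αstar hαstar
end

section
/- Let x_1, …, x_n ∈ ℝ^d, let b_1, …, b_c ∈ ℝ^d with x_i ≠ b_k for all i, k, let b'_1, …, b'_c ∈ ℝ^d be arbitrary, and let w_{ik} ≥ 0 for all i, k. If Σ_{i=1}^n Σ_{k=1}^c w_{ik} ‖x_i − b'_k‖₂² / (2‖x_i − b_k‖₂) ≤ Σ_{i=1}^n Σ_{k=1}^c w_{ik} ‖x_i − b_k‖₂² / (2‖x_i − b_k‖₂), then Σ_{i=1}^n Σ_{k=1}^c w_{ik} ‖x_i − b'_k‖₂ ≤ Σ_{i=1}^n Σ_{k=1}^c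 w_{ik} ‖x_i − b_k‖₂. -/
/-!
Lemma 1 of the paper is the AM-GM inequality `u ≤ u² / (2v) + v / 2` for `v > 0`, with equality
at `u = v`. Summing it with the nonnegative weights bounds the new robust objective by the new
quadratic objective plus half the old robust one, whereas the old quadratic objective plus that
same half is exactly the old robust objective.
-/

open Finset

lemma le_sq_div_two_mul_add_half (u : ℝ) {v : ℝ} (hv : 0 < v) : u ≤ u ^ 2 / (2 * v) + v / 2 := by
  rw [div_add_div _ _ (by positivity) two_ne_zero, le_div_iff₀ (by positivity)]
  nlinarith [sq_nonneg (u - v)]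

lemma sq_div_two_mul_self_add_half (v : ℝ) : v ^ 2 / (2 * v) + v / 2 = v := by
  rcases eq_or_ne v 0 with rfl | hv
  · simp
  · field_simp
    ring

lemma weighted_sum_le_of_weighted_sq_div_le {ι : Type*} (s : Finset ι) {w u v : ι → ℝ}
    (hw : ∀ i ∈ s, 0 ≤ w i) (hv : ∀ i ∈ s, 0 < v i)
    (hquad : ∑ i ∈ s, w i * u i ^ 2 / (2 * v i) ≤ ∑ i ∈ s, w i * v i ^ 2 / (2 * v i)) :
    ∑ i ∈ s, w i * u i ≤ ∑ i ∈ s, w i * v i := by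
  have hsplit (a : ι → ℝ) (i : ι) :
      w i * (a i ^ 2 / (2 * v i) + v i / 2) = w i * a i ^ 2 / (2 * v i) + w i * v i / 2 := by
    ring
  calc ∑ i ∈ s, w i * u i
      ≤ ∑ i ∈ s, w i * (u i ^ 2 / (2 * v i) + v i / 2) :=
        sum_le_sum fun i hi =>
          mul_le_mul_of_nonneg_left (le_sq_div_two_mul_add_half _ (hv i hi)) (hw i hi)
    _ = ∑ i ∈ s, w i * u i ^ 2 / (2 * v i) + ∑ i ∈ s, w i * v i / 2 := by
        simp only [hsplit, sum_add_distrib]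
    _ ≤ ∑ i ∈ s, w i * v i ^ 2 / (2 * v i) + ∑ i ∈ s, w i * v i / 2 := by gcongr
    _ = ∑ i ∈ s, w i * v i := by
        rw [← sum_add_distrib]
        exact sum_congr rfl fun i _ => by rw [← hsplit v i, sq_div_two_mul_self_add_half]

/-- From inequality (22) to inequality (24) of the paper via Lemma 1: if the reweighted
quadratic objective does not increase, then neither does the robust `L₂,₁`-type objective. -/
theorem quadratic_descent_implies_robust_descent (d n c : ℕ)
    (x : Fin n → EuclideanSpace ℝ (Fin d)) (b : Fin c → EuclideanSpace ℝ (Fin d))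
    (hne : ∀ i k, x i ≠ b k)
    (b' : Fin c → EuclideanSpace ℝ (Fin d))
    (w : Fin n → Fin c → ℝ) (hw : ∀ i k, 0 ≤ w i k)
    (hquad : ∑ i, ∑ k, w i k * ‖x i - b' k‖ ^ 2 / (2 * ‖x i - b k‖)
      ≤ ∑ i, ∑ k, w i k * ‖x i - b k‖ ^ 2 / (2 * ‖x i - b k‖)) :
    ∑ i, ∑ k, w i k * ‖x i - b' k‖ ≤ ∑ i, ∑ k, w i k * ‖x i - b k‖ := by
  simp only [← Fintype.sum_prod_type'] at hquad ⊢
  exact weighted_sum_le_of_weighted_sq_div_le univ (fun p _ => hw p.1 p.2)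
    (fun p _ => norm_pos_iff.mpr (sub_ne_zero.mpr (hne p.1 p.2))) hquad
end

section
/- Let x_1, …, x_n ∈ ℝ^d, let b_1, …, b_c ∈ ℝ^d with x_i ≠ b_k for all i, k, and let w_{ik} ≥ 0 with Σ_{i=1}^n w_{ik}/(2‖x_i − b_k‖₂) > 0 for each k. Define the reweighted centroids b'_k = (Σ_{i=1}^n w_{ik} x_i/(2‖x_i − b_k‖₂)) / (Σ_{i=1}^n w_{ik}/(2‖x_i − b_k‖₂)). Then the robust objective does not increase: Σ_{i=1}^n Σ_{k=1}^c w_{ik} ‖x_i − b'_k‖₂ ≤ Σ_{i=1}^n Σ_{k=1}^c w_{ik} ‖x_i − b_k‖₂. -/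
/-!
For `a > 0` we have `t ≤ t ^ 2 / (2 * a) + a / 2`, with equality at `t = a`. Hence, for each
cluster, `y ↦ ∑ᵢ wᵢ ‖xᵢ - y‖` is majorized by the quadratic `y ↦ ∑ᵢ cᵢ ‖xᵢ - y‖ ^ 2 + const`
with `cᵢ = wᵢ / (2 ‖xᵢ - b‖)`, and the two agree at `y = b`. The reweighted centroid is the
`c`-weighted mean of the `xᵢ`, which minimizes that quadratic by the parallel axis theorem,
so the objective cannot increase.
-/

open Finset RealInnerProductSpace

namespace Finset

variable {ι 𝕜 E : Type*} (s : Finset ι)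

theorem sum_smul_sub_centerMass [Field 𝕜] [AddCommGroup E] [Module 𝕜 E] (c : ι → 𝕜) (x : ι → E)
    (hc : ∑ i ∈ s, c i ≠ 0) : ∑ i ∈ s, c i • (x i - s.centerMass c x) = 0 := by
  rw [sum_congr rfl fun i _ => smul_sub (c i) (x i) _, sum_sub_distrib, ← sum_smul, centerMass,
    smul_inv_smul₀ hc, sub_self]

variable [NormedAddCommGroup E] [InnerProductSpace ℝ E] (c : ι → ℝ) (x : ι → E)

theorem sum_mul_norm_sub_sq_eq_centerMass_add (hc : ∑ i ∈ s, c i ≠ 0) (y : E) :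
    ∑ i ∈ s, c i * ‖x i - y‖ ^ 2 =
      ∑ i ∈ s, c i * ‖x i - s.centerMass c x‖ ^ 2
        + (∑ i ∈ s, c i) * ‖s.centerMass c x - y‖ ^ 2 := by
  set m := s.centerMass c x
  have expand : ∀ i, c i * ‖x i - y‖ ^ 2
      = c i * ‖x i - m‖ ^ 2 + 2 * ⟪c i • (x i - m), m - y⟫ + c i * ‖m - y‖ ^ 2 := fun i => by
    rw [← sub_add_sub_cancel (x i) m y, norm_add_sq_real, real_inner_smul_left]
    ring
  rw [sum_congr rfl fun i _ => expand i, sum_add_distrib, sum_add_distrib, ← mul_sum, ← sum_mul,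
    ← sum_inner, sum_smul_sub_centerMass s c x hc, inner_zero_left, mul_zero, add_zero]

theorem sum_mul_norm_sub_centerMass_sq_le (hc : ∀ i ∈ s, 0 ≤ c i) (y : E) :
    ∑ i ∈ s, c i * ‖x i - s.centerMass c x‖ ^ 2 ≤ ∑ i ∈ s, c i * ‖x i - y‖ ^ 2 := by
  by_cases hsum : ∑ i ∈ s, c i = 0
  · have hzero : ∀ i ∈ s, c i = 0 := (sum_eq_zero_iff_of_nonneg hc).1 hsum
    have vanish : ∀ z : E, ∑ i ∈ s, c i * ‖x i - z‖ ^ 2 = 0 := fun z =>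
      sum_eq_zero fun i hi => by rw [hzero i hi, zero_mul]
    rw [vanish, vanish]
  · rw [sum_mul_norm_sub_sq_eq_centerMass_add s c x hsum y, le_add_iff_nonneg_right]
    exact mul_nonneg (sum_nonneg hc) (sq_nonneg _)

end Finset

lemma le_sq_div_add_half {a : ℝ} (ha : 0 < a) (t : ℝ) : t ≤ t ^ 2 / (2 * a) + a / 2 := by
  rw [div_add_div _ _ (by positivity) two_ne_zero, le_div_iff₀ (by positivity)]
  nlinarith [sq_nonneg (t - a)]

section Reweighting

variable {ι E : Type*} [NormedAddCommGroup E] [InnerProductSpace ℝ E]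

noncomputable def reweightedCentroid (s : Finset ι) (w : ι → ℝ) (x : ι → E) (b : E) : E :=
  s.centerMass (fun i => w i / (2 * ‖x i - b‖)) x

theorem sum_mul_norm_sub_reweightedCentroid_le (s : Finset ι) (w : ι → ℝ)
    (hw : ∀ i ∈ s, 0 ≤ w i) (x : ι → E) (b : E) (hne : ∀ i ∈ s, x i ≠ b) :
    ∑ i ∈ s, w i * ‖x i - reweightedCentroid s w x b‖ ≤ ∑ i ∈ s, w i * ‖x i - b‖ := by
  set c : ι → ℝ := fun i => w i / (2 * ‖x i - b‖)
  set b' := reweightedCentroid s w x b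
  have majorize : ∀ i ∈ s, w i * ‖x i - b'‖ ≤ c i * ‖x i - b'‖ ^ 2 + w i * ‖x i - b‖ / 2 :=
    fun i hi => by
      have := mul_le_mul_of_nonneg_left
        (le_sq_div_add_half (norm_sub_pos_iff.2 (hne i hi)) ‖x i - b'‖) (hw i hi)
      linarith [show c i * ‖x i - b'‖ ^ 2 = w i * (‖x i - b'‖ ^ 2 / (2 * ‖x i - b‖)) by ring]
  have touch : ∀ i ∈ s, c i * ‖x i - b‖ ^ 2 + w i * ‖x i - b‖ / 2 = w i * ‖x i - b‖ :=
    fun i hi => by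
      have := (norm_sub_pos_iff.2 (hne i hi)).ne'
      simp only [c]
      field_simp
      ring
  have hc : ∀ i ∈ s, 0 ≤ c i := fun i hi => div_nonneg (hw i hi) (by positivity)
  calc ∑ i ∈ s, w i * ‖x i - b'‖
      ≤ ∑ i ∈ s, (c i * ‖x i - b'‖ ^ 2 + w i * ‖x i - b‖ / 2) := sum_le_sum majorize
    _ ≤ ∑ i ∈ s, (c i * ‖x i - b‖ ^ 2 + w i * ‖x i - b‖ / 2) := by
      rw [sum_add_distrib, sum_add_distrib]
      exact add_le_add_left (sum_mul_norm_sub_centerMass_sq_le s c x hc b) _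
    _ = ∑ i ∈ s, w i * ‖x i - b‖ := sum_congr rfl touch

end Reweighting

theorem reweighted_centroid_robust_descent_general (d n c : ℕ)
    (x : Fin n → EuclideanSpace ℝ (Fin d)) (b : Fin c → EuclideanSpace ℝ (Fin d))
    (hne : ∀ i k, x i ≠ b k)
    (w : Fin n → Fin c → ℝ) (hw : ∀ i k, 0 ≤ w i k)
    (b' : Fin c → EuclideanSpace ℝ (Fin d))
    (hb' : ∀ k, b' k = (∑ i, w i k / (2 * ‖x i - b k‖))⁻¹ •
        ∑ i, (w i k / (2 * ‖x i - b k‖)) • x i) :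
    ∑ i, ∑ k, w i k * ‖x i - b' k‖ ≤ ∑ i, ∑ k, w i k * ‖x i - b k‖ := by
  rw [sum_comm, sum_comm (f := fun i k => w i k * ‖x i - b k‖)]
  refine sum_le_sum fun k _ => ?_
  rw [show b' k = reweightedCentroid univ (w · k) x (b k) from hb' k]
  exact sum_mul_norm_sub_reweightedCentroid_le univ (w · k) (fun i _ => hw i k) x (b k)
    fun i _ => hne i k

/-- Inequality (24) of the paper: the iterative-reweighted centroid update does not increase
the robust objective `Σ_{i,k} w_{ik} ‖x_i − b_k‖`. -/
theorem reweighted_centroid_robust_descent (d n c : ℕ)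
    (x : Fin n → EuclideanSpace ℝ (Fin d)) (b : Fin c → EuclideanSpace ℝ (Fin d))
    (hne : ∀ i k, x i ≠ b k)
    (w : Fin n → Fin c → ℝ) (hw : ∀ i k, 0 ≤ w i k)
    (hpos : ∀ k, 0 < ∑ i, w i k / (2 * ‖x i - b k‖))
    (b' : Fin c → EuclideanSpace ℝ (Fin d))
    (hb' : ∀ k, b' k = (∑ i, w i k / (2 * ‖x i - b k‖))⁻¹ •
        ∑ i, (w i k / (2 * ‖x i - b k‖)) • x i) :
    ∑ i, ∑ k, w i k * ‖x i - b' k‖ ≤ ∑ i, ∑ k, w i k * ‖x i - b k‖ :=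
  reweighted_centroid_robust_descent_general d n c x b hne w hw b' hb'
end
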